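/- Let q be a prime with q ≡ 11 or 13 (mod 24) (i.e. q ≡ ±11 (mod 24)). For every complex number s with Re(s) > 1, L(s, λ_q) = (ζ(qs) ζ(2s) / ζ(s)) · ∏_p ( 1 + ∑_{m=3}^{q-1} { ((m+1)/q) + (m/q) } · p^{-ms} ), where the product runs over all prime numbers p. -/

import Mathlib

open Filter

/-- `λ_q(n) = (τ(n)/q)` : the Legendre symbol mod `q` of the number of divisors of `n`. -/
noncomputable def lamq (q : ℕ) [Fact q.Prime] (n : ℕ) : ℂ :=
  (legendreSym q (n.divisors.card : ℤ) : ℂ)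

/-!
Since `τ` is multiplicative, so is `λ_q`, with `λ_q(p^e) = ((e+1)/q)`. For `x = p^{-s}` the Euler
factor `∑_e ((e+1)/q) x^e` has `q`-periodic coefficients, so it equals `P(x) / (1 - x^q)` where
`P(x) = ∑_{m<q} ((m+1)/q) x^m`. As `(0/q) = (q/q) = 0`, we get
`(1 + x) P(x) = ∑_{m<q} (((m+1)/q) + (m/q)) x^m`, and `q ≡ ±11 (mod 24)` gives `(2/q) = -1` and
`(3/q) = 1` (supplementary law and reciprocity), which kill the coefficients of `x` and `x^2`:
what is left is the polynomial `D(x) = lamqFactor q x` of the statement. Hence the Euler factor is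
`(1 - x^q)⁻¹ (1 - x^2)⁻¹ (1 - x) D(x)`, and the Euler products of `ζ(qs)`, `ζ(2s)` and `ζ(s)`
give the theorem. The product `∏_p D(p^{-s})` needs no separate convergence argument: it is a
quotient of convergent products with nonzero limits.
-/

open Finset

namespace legendreSym

variable {q : ℕ} [Fact q.Prime]

lemma norm_le_one (a : ℤ) : ‖(legendreSym q a : ℂ)‖ ≤ 1 := by
  rcases eq_or_ne (a : ZMod q) 0 with h | h
  · simp [(eq_zero_iff q a).mpr h]
  · rcases eq_one_or_neg_one q h with h' | h' <;> simp [h']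

lemma add_prime (a : ℤ) : legendreSym q (a + q) = legendreSym q a := by
  simp [legendreSym]

lemma at_prime : legendreSym q q = 0 := by
  simp [legendreSym]

lemma at_two_of_mod_24 (hq : q % 24 = 11 ∨ q % 24 = 13) : legendreSym q 2 = -1 := by
  rw [eq_neg_one_iff, Int.cast_ofNat, ZMod.exists_sq_eq_two_iff (by omega)]
  omega

lemma at_three_of_mod_24 (hq : q % 24 = 11 ∨ q % 24 = 13) : legendreSym q 3 = 1 := by
  have : Fact (Nat.Prime 3) := ⟨Nat.prime_three⟩
  rcases hq with hq | hq
  · have h := quadratic_reciprocity_three_mod_four (p := 3) (q := q) (by norm_num) (by omega)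
    rw [legendreSym.mod 3, show (q : ℤ) % ((3 : ℕ) : ℤ) = 2 by omega] at h
    exact_mod_cast h.trans (show -legendreSym 3 2 = 1 by rfl)
  · have h := quadratic_reciprocity_one_mod_four (p := q) (q := 3) (by omega) (by norm_num)
    rw [legendreSym.mod 3, show (q : ℤ) % ((3 : ℕ) : ℤ) = 1 by omega, at_one] at h
    exact_mod_cast h.symm

end legendreSym

lemma one_sub_ne_zero_of_norm_lt_one {K : Type*} [NormedRing K] [NormOneClass K] {x : K}
    (hx : ‖x‖ < 1) : 1 - x ≠ 0 := by
  rw [sub_ne_zero]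
  rintro rfl
  simp at hx

lemma tsum_mul_pow_of_periodic {K : Type*} [NormedField K] [CompleteSpace K] {c : ℕ → K}
    {N : ℕ} (hN : 0 < N) (hc : Function.Periodic c N) {C : ℝ} (hC : ∀ n, ‖c n‖ ≤ C)
    {x : K} (hx : ‖x‖ < 1) :
    ∑' n, c n * x ^ n = (∑ n ∈ range N, c n * x ^ n) / (1 - x ^ N) := by
  have hsum : Summable fun n ↦ c n * x ^ n := by
    refine .of_norm_bounded ((summable_geometric_of_lt_one (norm_nonneg x) hx).mul_left C)
      fun n ↦ ?_
    rw [norm_mul, norm_pow]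
    exact mul_le_mul_of_nonneg_right (hC n) (by positivity)
  have shift : ∀ n, c (n + N) * x ^ (n + N) = c n * x ^ n * x ^ N := fun n ↦ by
    rw [hc n, pow_add, mul_assoc]
  have key := hsum.sum_add_tsum_nat_add N
  rw [tsum_congr shift, tsum_mul_right] at key
  have hxN : ‖x ^ N‖ < 1 := by simpa using pow_lt_one₀ (norm_nonneg x) hx hN.ne'
  rw [eq_div_iff (one_sub_ne_zero_of_norm_lt_one hxN)]
  linear_combination -key

section LocalFactor

variable {R : Type*} [CommRing R]

noncomputable def lamqFactor (q : ℕ) [Fact q.Prime] (x : R) : R :=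
  1 + ∑ m ∈ Icc 3 (q - 1),
    ((legendreSym q ((m : ℤ) + 1) + legendreSym q (m : ℤ) : ℤ) : R) * x ^ m

variable {q : ℕ} [Fact q.Prime]

lemma one_add_mul_sum_legendreSym_succ (x : R) :
    (1 + x) * ∑ m ∈ range q, (legendreSym q ((m : ℤ) + 1) : R) * x ^ m =
      ∑ m ∈ range q,
        ((legendreSym q ((m : ℤ) + 1) + legendreSym q (m : ℤ) : ℤ) : R) * x ^ m := by
  have shift : x * ∑ m ∈ range q, (legendreSym q ((m : ℤ) + 1) : R) * x ^ m =
      ∑ m ∈ range q, (legendreSym q (m : ℤ) : R) * x ^ m := by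
    have h := sum_range_succ' (fun m ↦ (legendreSym q (m : ℤ) : R) * x ^ m) q
    rw [sum_range_succ, legendreSym.at_prime] at h
    simp only [Nat.cast_add, Nat.cast_one, Nat.cast_zero, legendreSym.at_zero, Int.cast_zero,
      zero_mul, add_zero] at h
    rw [h, mul_sum]
    exact sum_congr rfl fun m _ ↦ by ring
  rw [add_mul, one_mul, shift, ← sum_add_distrib]
  push_cast
  exact sum_congr rfl fun m _ ↦ by ring

lemma sum_range_legendreSym_eq_lamqFactor (h2 : legendreSym q 2 = -1)
    (h3 : legendreSym q 3 = 1) (x : R) :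
    ∑ m ∈ range q, ((legendreSym q ((m : ℤ) + 1) + legendreSym q (m : ℤ) : ℤ) : R) * x ^ m
      = lamqFactor q x := by
  have hq : 3 < q := by
    have := (Fact.out : q.Prime).two_le
    by_contra!
    interval_cases q
    · exact absurd (legendreSym.at_prime.symm.trans h2) (by decide)
    · exact absurd (legendreSym.at_prime.symm.trans h3) (by decide)
  rw [lamqFactor, ← sum_range_add_sum_Ico _ hq.le,
    Icc_sub_one_right_eq_Ico_of_not_isMin (by simp; omega)]
  simp [sum_range_succ, h2, h3]

end LocalFactor

lemma lamqFactor_eq_tsum_mul {q : ℕ} [Fact q.Prime] (h2 : legendreSym q 2 = -1)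
    (h3 : legendreSym q 3 = 1) {x : ℂ} (hx : ‖x‖ < 1) :
    lamqFactor q x = (∑' e : ℕ, (legendreSym q ((e : ℤ) + 1) : ℂ) * x ^ e) *
      ((1 - x ^ q) * (1 - x ^ 2) / (1 - x)) := by
  have hxq : 1 - x ^ q ≠ 0 := one_sub_ne_zero_of_norm_lt_one <| by
    simpa using pow_lt_one₀ (norm_nonneg x) hx (Fact.out : q.Prime).ne_zero
  have h1 : 1 - x ≠ 0 := one_sub_ne_zero_of_norm_lt_one hx
  have hperiodic : Function.Periodic (fun e : ℕ ↦ (legendreSym q ((e : ℤ) + 1) : ℂ)) q :=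
    fun e ↦ by simp only [Nat.cast_add, add_right_comm _ (q : ℤ), legendreSym.add_prime]
  rw [tsum_mul_pow_of_periodic (Fact.out : q.Prime).pos hperiodic
      (fun e ↦ legendreSym.norm_le_one _) hx, ← sum_range_legendreSym_eq_lamqFactor h2 h3,
    ← one_add_mul_sum_legendreSym_succ]
  field_simp
  ring

lemma LSeries.term_pow_eq (f : ℕ → ℂ) (s : ℂ) {p : ℕ} (hp : p ≠ 0) (e : ℕ) :
    LSeries.term f s (p ^ e) = f (p ^ e) * ((p : ℂ) ^ (-s)) ^ e := by
  rw [LSeries.term_of_ne_zero (pow_ne_zero e hp), div_eq_mul_inv, Nat.cast_pow,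
    ← Complex.natCast_cpow_natCast_mul, ← Complex.cpow_neg, ← Complex.cpow_nat_mul, mul_neg]

theorem LSeries_eulerProduct_hasProd_of_mul {f : ℕ → ℂ} (hf₁ : f 1 = 1)
    (hmul : ∀ {m n : ℕ}, m.Coprime n → f (m * n) = f m * f n) {s : ℂ}
    (hs : LSeriesSummable f s) :
    HasProd (fun p : Nat.Primes ↦ ∑' e, LSeries.term f s (p ^ e)) (LSeries f s) := by
  refine EulerProduct.eulerProduct_hasProd ?_ (fun {m n} hmn ↦ ?_) (summable_norm_iff.mpr hs)
    (LSeries.term_zero f s)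
  · simp [hf₁]
  rcases eq_or_ne m 0 with rfl | hm
  · simp [(Nat.coprime_zero_left n).mp hmn]
  rcases eq_or_ne n 0 with rfl | hn
  · simp [(Nat.coprime_zero_right m).mp hmn]
  rw [LSeries.term_of_ne_zero (mul_ne_zero hm hn), LSeries.term_of_ne_zero hm,
    LSeries.term_of_ne_zero hn, hmul hmn, Nat.cast_mul, Complex.natCast_mul_natCast_cpow,
    mul_div_mul_comm]

section lamq

variable (q : ℕ) [Fact q.Prime]

lemma lamq_one : lamq q 1 = 1 := by
  simp [lamq]

lemma lamq_mul {m n : ℕ} (hmn : m.Coprime n) : lamq q (m * n) = lamq q m * lamq q n := by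
  simp [lamq, Nat.Coprime.card_divisors_mul hmn, legendreSym.mul]

lemma lamq_prime_pow {p : ℕ} (hp : p.Prime) (e : ℕ) :
    lamq q (p ^ e) = legendreSym q ((e : ℤ) + 1) := by
  simp [lamq, Nat.divisors_prime_pow hp]

lemma norm_lamq_le_one (n : ℕ) : ‖lamq q n‖ ≤ 1 :=
  legendreSym.norm_le_one _

theorem LSeries_lamq_eulerProduct_hasProd {s : ℂ} (hs : 1 < s.re) :
    HasProd
      (fun p : Nat.Primes ↦ ∑' e : ℕ, (legendreSym q ((e : ℤ) + 1) : ℂ) * ((p : ℂ) ^ (-s)) ^ e)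
      (LSeries (lamq q) s) := by
  convert LSeries_eulerProduct_hasProd_of_mul (lamq_one q) (lamq_mul q)
    (LSeriesSummable_of_bounded_of_one_lt_re (fun n _ ↦ norm_lamq_le_one q n) hs) using 3 with p
  funext e
  rw [LSeries.term_pow_eq _ _ (p := p) p.prop.ne_zero, lamq_prime_pow q p.prop]

end lamq

lemma one_lt_re_natCast_mul {s : ℂ} (hs : 1 < s.re) {n : ℕ} (hn : 0 < n) : 1 < (n * s).re := by
  have : (n * s).re = n * s.re := by simp
  nlinarith [(Nat.one_le_cast (α := ℝ)).mpr hn]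

theorem riemannZeta_natCast_mul_inv_eulerProduct_hasProd {s : ℂ} (hs : 1 < s.re) {n : ℕ}
    (hn : 0 < n) :
    HasProd (fun p : Nat.Primes ↦ 1 - ((p : ℂ) ^ (-s)) ^ n) (riemannZeta (n * s))⁻¹ := by
  have hns := one_lt_re_natCast_mul hs hn
  have h := (riemannZeta_eulerProduct_hasProd hns).inv₀ (riemannZeta_ne_zero_of_one_lt_re hns)
  simp only [inv_inv, ← mul_neg, Complex.cpow_nat_mul] at h
  exact h

lemma norm_natCast_cpow_neg_lt_one {n : ℕ} (hn : 1 < n) {s : ℂ} (hs : 0 < s.re) :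
    ‖(n : ℂ) ^ (-s)‖ < 1 := by
  rw [Complex.norm_natCast_cpow_of_pos (by omega), Complex.neg_re]
  exact Real.rpow_lt_one_of_one_lt_of_neg (by exact_mod_cast hn) (by linarith)

theorem lamqFactor_eulerProduct_hasProd {q : ℕ} [Fact q.Prime] (h2 : legendreSym q 2 = -1)
    (h3 : legendreSym q 3 = 1) {s : ℂ} (hs : 1 < s.re) :
    HasProd (fun p : Nat.Primes ↦ lamqFactor q ((p : ℂ) ^ (-s)))
      (LSeries (lamq q) s / (riemannZeta (q * s) * riemannZeta (2 * s) / riemannZeta s)) := by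
  have hZ := ((riemannZeta_natCast_mul_inv_eulerProduct_hasProd hs (Fact.out : q.Prime).pos).mul
    (riemannZeta_natCast_mul_inv_eulerProduct_hasProd hs two_pos)).div₀
    (riemannZeta_natCast_mul_inv_eulerProduct_hasProd hs one_pos)
    (inv_ne_zero (riemannZeta_ne_zero_of_one_lt_re (one_lt_re_natCast_mul hs one_pos)))
  simp only [Nat.cast_ofNat, Nat.cast_one, one_mul, pow_one] at hZ
  convert (LSeries_lamq_eulerProduct_hasProd q hs).mul hZ using 1
  · funext p
    exact lamqFactor_eq_tsum_mul h2 h3 (norm_natCast_cpow_neg_lt_one p.prop.one_lt (by linarith))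
  · simp only [div_eq_mul_inv, mul_inv, inv_inv]

theorem dirichlet_series_lamq_pm11_mod24 (q : ℕ) [Fact q.Prime]
    (hq : q % 24 = 11 ∨ q % 24 = 13) (s : ℂ) (hs : 1 < s.re) :
    LSeries (lamq q) s =
      riemannZeta (q * s) * riemannZeta (2 * s) / riemannZeta s *
        ∏' p : Nat.Primes,
          (1 + ∑ m ∈ Finset.Icc 3 (q - 1),
            ((legendreSym q ((m : ℤ) + 1) + legendreSym q (m : ℤ) : ℤ) : ℂ) *
              ((p : ℕ) : ℂ) ^ (-((m : ℂ) * s))) := by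
  have hζ : ∀ n : ℕ, 0 < n → riemannZeta (n * s) ≠ 0 := fun n hn ↦
    riemannZeta_ne_zero_of_one_lt_re (one_lt_re_natCast_mul hs hn)
  have hD := lamqFactor_eulerProduct_hasProd (legendreSym.at_two_of_mod_24 hq)
    (legendreSym.at_three_of_mod_24 hq) hs
  simp_rw [← mul_neg, Complex.cpow_nat_mul]
  change _ = _ * ∏' p : Nat.Primes, lamqFactor q (((p : ℕ) : ℂ) ^ (-s))
  rw [hD.tprod_eq, mul_div_cancel₀]
  exact div_ne_zero (mul_ne_zero (hζ q (Fact.out : q.Prime).pos) (mod_cast hζ 2 two_pos))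
    (by simpa using hζ 1 one_pos)
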